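/- Let L be a Leibniz algebra and a(z), b(z), c(z) pairwise mutually local formal distributions over L. Then for every n ∈ ℤ₊ the pairs ((a₍ₙ₎b)(z), c(z)) and (a(z), (b₍ₙ₎c)(z)) are local. -/

import Mathlib

variable {k L : Type*} [Field k] [CharZero k] [AddCommGroup L] [Module k L]

/-- `Σ_{s=0}^{N} (−1)^s C(N,s) [x_{n−s}, y_{m+s}]`. -/
def locSum (br : L →ₗ[k] L →ₗ[k] L) (x y : ℤ → L) (N : ℕ) (n m : ℤ) : L :=
  ∑ s ∈ Finset.range (N + 1),
    ((-1) ^ s * (N.choose s) : ℤ) • br (x (n - (s : ℤ))) (y (m + (s : ℤ)))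

/-- The pair of formal distributions `(x(z), y(z))` over the Leibniz algebra is local. -/
def IsLocalPair (br : L →ₗ[k] L →ₗ[k] L) (x y : ℤ → L) : Prop :=
  ∃ N : ℕ, ∀ n m : ℤ, locSum br x y N n m = 0

/-- The `n`-th product `(a₍ₙ₎b)ₘ = Σ_{s≥0} (−1)^s C(n,s) [a_{n−s}, b_{m+s}]`. -/
def nProd (br : L →ₗ[k] L →ₗ[k] L) (a b : ℤ → L) (n : ℕ) : ℤ → L :=
  fun m => locSum br a b n (n : ℤ) m

/-!
Let `ℤ[ℤ³]` act on families `ℤ³ → L` by translation, and put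
`A(p,q,r) = [[a_p b_q] c_r]`, `B(p,q,r) = [a_p [b_q c_r]]`, `C(p,q,r) = [b_q [a_p c_r]]`.
Locality of `(a,b)`, `(b,c)`, `(a,c)` says that the difference operators
`u = 1 - T(-1,1,0)`, `v = 1 - T(0,-1,1)`, `w = 1 - T(-1,0,1)` act nilpotently on `A`, `B`, `C`
respectively, and the two claims say that `v` acts nilpotently on `uⁿ A` and `w` on `vⁿ B`.
The Leibniz identity gives `B = A + C`, and `v ≡ w mod u`, `w ≡ u mod v`. So it suffices to know
that the operators acting nilpotently on an element form a radical ideal, and that in a radical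
ideal `y - z ∈ P` and `y z ∈ P` force `y ∈ P`.
-/

open Finset

section RadicalAnnihilator

variable {R M : Type*} [CommRing R] [AddCommGroup M] [Module R M]

theorem Ideal.IsRadical.mem_of_sub_mem_of_mul_mem {P : Ideal R} (hP : P.IsRadical) {y z : R}
    (hsub : y - z ∈ P) (hmul : y * z ∈ P) : y ∈ P :=
  hP ⟨2, by
    rw [show y ^ 2 = y * z + y * (y - z) by ring]
    exact P.add_mem hmul (P.mul_mem_left y hsub)⟩

theorem mem_radical_annihilator_span_singleton {r : R} {x : M} :
    r ∈ (R ∙ x).annihilator.radical ↔ ∃ K : ℕ, r ^ K • x = 0 :=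
  exists_congr fun _ => Submodule.mem_annihilator_span_singleton _ _

theorem radical_annihilator_le_smul (r : R) (x : M) :
    (R ∙ x).annihilator.radical ≤ (R ∙ (r • x)).annihilator.radical :=
  Ideal.radical_mono (Submodule.annihilator_mono (Submodule.span_singleton_smul_le R r x))

theorem radical_annihilator_inf_le_add (x y : M) :
    (R ∙ x).annihilator.radical ⊓ (R ∙ y).annihilator.radical ≤
      (R ∙ (x + y)).annihilator.radical := by
  rw [← Ideal.radical_inf, ← Submodule.annihilator_sup]
  exact Ideal.radical_mono (Submodule.annihilator_mono
    ((Submodule.span_singleton_le_iff_mem _ _).mpr (Submodule.add_mem_sup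
      (Submodule.mem_span_singleton_self x) (Submodule.mem_span_singleton_self y))))

theorem mem_radical_annihilator_pow_smul {r s t : R} {x y z : M} (hxyz : x = y + z)
    (hr : r ∈ (R ∙ x).annihilator.radical) (hs : s ∈ (R ∙ y).annihilator.radical)
    (ht : t ∈ (R ∙ z).annihilator.radical) (hst : s - t ∈ Ideal.span {r}) (n : ℕ) :
    s ∈ (R ∙ (r ^ n • x)).annihilator.radical := by
  have hr' := radical_annihilator_le_smul (r ^ n) x hr
  have hmul : s * t ∈ (R ∙ (r ^ n • x)).annihilator.radical := by
    rw [hxyz, smul_add]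
    exact radical_annihilator_inf_le_add _ _
      ⟨Ideal.mul_mem_right _ _ (radical_annihilator_le_smul _ _ hs),
        Ideal.mul_mem_left _ _ (radical_annihilator_le_smul _ _ ht)⟩
  exact (Ideal.radical_isRadical _).mem_of_sub_mem_of_mul_mem
    ((Ideal.span_singleton_le_iff_mem _).mpr hr' hst) hmul

end RadicalAnnihilator

theorem one_sub_pow_eq_sum {S : Type*} [Ring S] (X : S) (N : ℕ) :
    (1 - X) ^ N = ∑ s ∈ range (N + 1), ((-1) ^ s * (N.choose s) : ℤ) • X ^ s := by
  rw [sub_eq_neg_add, (Commute.one_right (-X)).add_pow]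
  refine sum_congr rfl fun s _ => ?_
  rw [one_pow, mul_one, neg_pow, zsmul_eq_mul, Int.cast_mul, Int.cast_pow, Int.cast_neg,
    Int.cast_one, Int.cast_natCast, mul_assoc, mul_assoc, ((Nat.cast_commute _ _).pow_right s).eq]

section Translation

variable (G V : Type*) [AddMonoid G] [AddCommGroup V]

def translationHom : Multiplicative G →* Module.End ℤ (G → V) where
  toFun g := LinearMap.funLeft ℤ V (· + g.toAdd)
  map_one' := by ext; simp
  map_mul' g h := by ext; simp [add_assoc]

noncomputable instance : Module (AddMonoidAlgebra ℤ G) (G → V) :=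
  Module.compHom _
    (AddMonoidAlgebra.lift ℤ (Module.End ℤ (G → V)) G (translationHom G V)).toRingHom

variable {G V}

theorem AddMonoidAlgebra.single_one_smul_apply (g : G) (D : G → V) (x : G) :
    (AddMonoidAlgebra.single g (1 : ℤ) • D) x = D (x + g) := by
  show AddMonoidAlgebra.lift ℤ (Module.End ℤ (G → V)) G (translationHom G V) _ D x = _
  simp [translationHom]

noncomputable def shiftDiff (δ : G) : AddMonoidAlgebra ℤ G := 1 - AddMonoidAlgebra.single δ 1

theorem shiftDiff_pow_smul_apply (δ : G) (N : ℕ) (D : G → V) (x : G) :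
    (shiftDiff δ ^ N • D) x =
      ∑ s ∈ range (N + 1), ((-1) ^ s * (N.choose s) : ℤ) • D (x + s • δ) := by
  rw [shiftDiff, one_sub_pow_eq_sum, Finset.sum_smul, Finset.sum_apply]
  refine sum_congr rfl fun s _ => ?_
  rw [smul_assoc, Pi.smul_apply, AddMonoidAlgebra.single_pow, one_pow,
    AddMonoidAlgebra.single_one_smul_apply]

end Translation

section ShiftDiffSpan

variable {G : Type*} [AddCommMonoid G]

theorem shiftDiff_sub_shiftDiff_add_mem_span (δ ε : G) :
    shiftDiff ε - shiftDiff (δ + ε) ∈ Ideal.span {shiftDiff δ} :=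
  Ideal.mem_span_singleton'.mpr ⟨-AddMonoidAlgebra.single ε 1, by
    simp only [shiftDiff, mul_sub, mul_one, neg_mul, AddMonoidAlgebra.single_mul_single,
      add_comm ε δ]
    abel⟩

theorem shiftDiff_add_sub_shiftDiff_mem_span (δ ε : G) :
    shiftDiff (δ + ε) - shiftDiff δ ∈ Ideal.span {shiftDiff ε} :=
  Ideal.mem_span_singleton'.mpr ⟨AddMonoidAlgebra.single δ 1, by
    simp only [shiftDiff, mul_sub, mul_one, AddMonoidAlgebra.single_mul_single]
    abel⟩

end ShiftDiffSpan

section TripleBrackets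

variable {F V : Type*} [Field F] [AddCommGroup V] [Module F V]
variable (br : V →ₗ[F] V →ₗ[F] V) (a b c : ℤ → V)

def leftNormed (x : ℤ × ℤ × ℤ) : V := br (br (a x.1) (b x.2.1)) (c x.2.2)

def rightNormed (x : ℤ × ℤ × ℤ) : V := br (a x.1) (br (b x.2.1) (c x.2.2))

def rightNormedSwap (x : ℤ × ℤ × ℤ) : V := br (b x.2.1) (br (a x.1) (c x.2.2))

variable {br a b c}

theorem rightNormed_eq_leftNormed_add_rightNormedSwap
    (leib : ∀ x y z : V, br x (br y z) - br y (br x z) = br (br x y) z) :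
    rightNormed br a b c = leftNormed br a b c + rightNormedSwap br a b c :=
  funext fun _ => eq_add_of_sub_eq (leib _ _ _)

theorem shiftDiff_pow_smul_leftNormed (N : ℕ) (n m r : ℤ) :
    (shiftDiff ((-1, 1, 0) : ℤ × ℤ × ℤ) ^ N • leftNormed br a b c) (n, m, r) =
      br (locSum br a b N n m) (c r) := by
  simp only [shiftDiff_pow_smul_apply, locSum, map_sum, map_zsmul, LinearMap.sum_apply,
    LinearMap.smul_apply, leftNormed, Prod.smul_mk, Prod.mk_add_mk, smul_neg, nsmul_eq_mul,
    mul_one, mul_zero, add_zero, ← sub_eq_add_neg]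

theorem shiftDiff_pow_smul_rightNormed (N : ℕ) (p n m : ℤ) :
    (shiftDiff ((0, -1, 1) : ℤ × ℤ × ℤ) ^ N • rightNormed br a b c) (p, n, m) =
      br (a p) (locSum br b c N n m) := by
  simp only [shiftDiff_pow_smul_apply, locSum, map_sum, map_zsmul, rightNormed, Prod.smul_mk,
    Prod.mk_add_mk, smul_neg, nsmul_eq_mul, mul_one, mul_zero, add_zero, ← sub_eq_add_neg]

theorem shiftDiff_pow_smul_rightNormedSwap (N : ℕ) (n q m : ℤ) :
    (shiftDiff ((-1, 0, 1) : ℤ × ℤ × ℤ) ^ N • rightNormedSwap br a b c) (n, q, m) =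
      br (b q) (locSum br a c N n m) := by
  simp only [shiftDiff_pow_smul_apply, locSum, map_sum, map_zsmul, rightNormedSwap,
    Prod.smul_mk, Prod.mk_add_mk, smul_neg, nsmul_eq_mul, mul_one, mul_zero, add_zero,
    ← sub_eq_add_neg]

theorem locSum_nProd_left (n K : ℕ) (p m : ℤ) :
    locSum br (nProd br a b n) c K p m =
      (shiftDiff ((0, -1, 1) : ℤ × ℤ × ℤ) ^ K •
        shiftDiff ((-1, 1, 0) : ℤ × ℤ × ℤ) ^ n • leftNormed br a b c) (n, p, m) := by
  simp only [shiftDiff_pow_smul_apply, locSum, nProd, map_sum, map_zsmul, LinearMap.sum_apply,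
    LinearMap.smul_apply, leftNormed, Prod.smul_mk, Prod.mk_add_mk, smul_neg, nsmul_eq_mul,
    mul_one, mul_zero, add_zero, ← sub_eq_add_neg]

theorem locSum_nProd_right (n K : ℕ) (p m : ℤ) :
    locSum br a (nProd br b c n) K p m =
      (shiftDiff ((-1, 0, 1) : ℤ × ℤ × ℤ) ^ K •
        shiftDiff ((0, -1, 1) : ℤ × ℤ × ℤ) ^ n • rightNormed br a b c) (p, n, m) := by
  simp only [shiftDiff_pow_smul_apply, locSum, nProd, map_sum, map_zsmul, rightNormed,
    Prod.smul_mk, Prod.mk_add_mk, smul_neg, nsmul_eq_mul, mul_one, mul_zero, add_zero,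
    ← sub_eq_add_neg]

theorem IsLocalPair.shiftDiff_mem_radical_leftNormed (h : IsLocalPair br a b) (c : ℤ → V) :
    shiftDiff ((-1, 1, 0) : ℤ × ℤ × ℤ) ∈ (_ ∙ leftNormed br a b c).annihilator.radical := by
  obtain ⟨N, hN⟩ := h
  refine mem_radical_annihilator_span_singleton.mpr ⟨N, funext fun ⟨n, m, r⟩ => ?_⟩
  rw [shiftDiff_pow_smul_leftNormed, hN, LinearMap.map_zero₂, Pi.zero_apply]

theorem IsLocalPair.shiftDiff_mem_radical_rightNormed (h : IsLocalPair br b c) (a : ℤ → V) :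
    shiftDiff ((0, -1, 1) : ℤ × ℤ × ℤ) ∈ (_ ∙ rightNormed br a b c).annihilator.radical := by
  obtain ⟨N, hN⟩ := h
  refine mem_radical_annihilator_span_singleton.mpr ⟨N, funext fun ⟨p, n, m⟩ => ?_⟩
  rw [shiftDiff_pow_smul_rightNormed, hN, map_zero, Pi.zero_apply]

theorem IsLocalPair.shiftDiff_mem_radical_rightNormedSwap (h : IsLocalPair br a c) (b : ℤ → V) :
    shiftDiff ((-1, 0, 1) : ℤ × ℤ × ℤ) ∈ (_ ∙ rightNormedSwap br a b c).annihilator.radical := by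
  obtain ⟨N, hN⟩ := h
  refine mem_radical_annihilator_span_singleton.mpr ⟨N, funext fun ⟨n, q, m⟩ => ?_⟩
  rw [shiftDiff_pow_smul_rightNormedSwap, hN, map_zero, Pi.zero_apply]

theorem isLocalPair_nProd_left {n : ℕ} (h : shiftDiff ((0, -1, 1) : ℤ × ℤ × ℤ) ∈
    (_ ∙ shiftDiff ((-1, 1, 0) : ℤ × ℤ × ℤ) ^ n • leftNormed br a b c).annihilator.radical) :
    IsLocalPair br (nProd br a b n) c := by
  obtain ⟨K, hK⟩ := mem_radical_annihilator_span_singleton.mp h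
  exact ⟨K, fun p m => by rw [locSum_nProd_left, hK, Pi.zero_apply]⟩

theorem isLocalPair_nProd_right {n : ℕ} (h : shiftDiff ((-1, 0, 1) : ℤ × ℤ × ℤ) ∈
    (_ ∙ shiftDiff ((0, -1, 1) : ℤ × ℤ × ℤ) ^ n • rightNormed br a b c).annihilator.radical) :
    IsLocalPair br a (nProd br b c n) := by
  obtain ⟨K, hK⟩ := mem_radical_annihilator_span_singleton.mp h
  exact ⟨K, fun p m => by rw [locSum_nProd_right, hK, Pi.zero_apply]⟩

end TripleBrackets

theorem stmt_14_general (br : L →ₗ[k] L →ₗ[k] L)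
    (leib : ∀ x y z : L, br x (br y z) - br y (br x z) = br (br x y) z)
    (a b c : ℤ → L)
    (hab : IsLocalPair br a b)
    (hac : IsLocalPair br a c)
    (hbc : IsLocalPair br b c) :
    ∀ n : ℕ, IsLocalPair br (nProd br a b n) c ∧ IsLocalPair br a (nProd br b c n) := by
  intro n
  have hleib := rightNormed_eq_leftNormed_add_rightNormedSwap (a := a) (b := b) (c := c) leib
  have hA := hab.shiftDiff_mem_radical_leftNormed c
  have hB := hbc.shiftDiff_mem_radical_rightNormed a
  have hC := hac.shiftDiff_mem_radical_rightNormedSwap b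
  have hvw := shiftDiff_sub_shiftDiff_add_mem_span ((-1, 1, 0) : ℤ × ℤ × ℤ) (0, -1, 1)
  have hwu := shiftDiff_add_sub_shiftDiff_mem_span ((-1, 1, 0) : ℤ × ℤ × ℤ) (0, -1, 1)
  norm_num at hvw hwu
  refine ⟨isLocalPair_nProd_left ?_, isLocalPair_nProd_right ?_⟩
  · refine mem_radical_annihilator_pow_smul (z := (-1 : AddMonoidAlgebra ℤ (ℤ × ℤ × ℤ)) •
      rightNormedSwap br a b c) ?_ hA hB (radical_annihilator_le_smul _ _ hC) hvw n
    rw [neg_one_smul, hleib, add_neg_cancel_right]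
  · exact mem_radical_annihilator_pow_smul (hleib.trans (add_comm _ _)) hB hC hA hwu n

/-- Let `L` be a Leibniz algebra and `a(z), b(z), c(z)` pairwise mutually local formal
distributions over `L`. Then for every `n ∈ ℤ₊` the pairs `((a₍ₙ₎b)(z), c(z))` and
`(a(z), (b₍ₙ₎c)(z))` are local. -/
theorem stmt_14 (br : L →ₗ[k] L →ₗ[k] L)
    (leib : ∀ x y z : L, br x (br y z) - br y (br x z) = br (br x y) z)
    (a b c : ℤ → L)
    (hab : IsLocalPair br a b) (hba : IsLocalPair br b a)
    (hac : IsLocalPair br a c) (hca : IsLocalPair br c a)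
    (hbc : IsLocalPair br b c) (hcb : IsLocalPair br c b) :
    ∀ n : ℕ, IsLocalPair br (nProd br a b n) c ∧ IsLocalPair br a (nProd br b c n) :=
  stmt_14_general br leib a b c hab hac hbc
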